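/- arXiv:1911.05333 — 5 statements merged into one kernel-verified Lean document; each statement's English description precedes it below -/
import Mathlib

section
/- Let n ≥ 1, let w : ℕ → ℕ → ℝ, and let D : Fin (n+1) → ℝ satisfy the 1D recurrence. Then for every j with 1 ≤ j ≤ n, D j = D 0 + min over all strictly increasing finite sequences 0 = i_0 < i_1 < … < i_k = j (with k ≥ 1, all terms ≤ n) of the sum Σ_{t=0}^{k-1} w i_t i_{t+1}. (The minimum is over a finite nonempty set.) -/
/-!
Unfolding the recurrence along a minimizing predecessor `i < j` extends an optimal path to `i`
by the edge `i → j`, so `D j - D 0` is a path weight; conversely, any path to `j` ends with an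
edge `i → j`, and the recurrence together with the bound at `i` shows its weight is at least
`D j - D 0`. Both directions go by strong induction on `j`, with the empty path at `j = 0`.
-/

theorem Fin.eq_zero_of_strictMono_of_apply_last_eq_apply_zero {α : Type*} [Preorder α] {k : ℕ}
    {p : Fin (k + 1) → α} (hp : StrictMono p) (h : p (Fin.last k) = p 0) : k = 0 := by
  simpa [Fin.ext_iff] using hp.injective h

theorem Fin.strictMono_snoc {α : Type*} [Preorder α] {k : ℕ} {p : Fin (k + 1) → α} {a : α}
    (hp : StrictMono p) (ha : p (Fin.last k) < a) :
    StrictMono (Fin.snoc p a : Fin (k + 2) → α) := by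
  rw [Fin.strictMono_iff_lt_succ]
  intro t
  induction t using Fin.lastCases with
  | last => simpa only [Fin.succ_last, Fin.snoc_last, Fin.snoc_castSucc] using ha
  | cast s =>
    simpa only [Fin.succ_castSucc, Fin.snoc_castSucc] using hp Fin.castSucc_lt_succ

/-- The empty path (`k = 0`) is allowed, so that `pathWeights n w 0 = {0}`. -/
def pathWeights (n : ℕ) (w : ℕ → ℕ → ℝ) (j : ℕ) : Set ℝ :=
  {x | ∃ k, ∃ p : Fin (k + 1) → ℕ, StrictMono p ∧ p 0 = 0 ∧ p (Fin.last k) = j ∧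
    (∀ t, p t ≤ n) ∧ x = ∑ t : Fin k, w (p t.castSucc) (p t.succ)}

section

variable {n : ℕ} {w : ℕ → ℕ → ℝ}

lemma pathWeights_zero : pathWeights n w 0 = {0} := by
  ext x
  constructor
  · rintro ⟨k, p, hp, h0, hlast, -, rfl⟩
    obtain rfl := Fin.eq_zero_of_strictMono_of_apply_last_eq_apply_zero hp (hlast.trans h0.symm)
    simp
  · rintro rfl
    exact ⟨0, fun _ => 0, Subsingleton.strictMono (α := Fin 1) _, rfl, rfl,
      fun _ => Nat.zero_le n, by simp⟩

lemma add_mem_pathWeights {i j : ℕ} {x : ℝ} (hx : x ∈ pathWeights n w i) (hij : i < j)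
    (hjn : j ≤ n) : x + w i j ∈ pathWeights n w j := by
  obtain ⟨k, p, hp, h0, hlast, hle, rfl⟩ := hx
  refine ⟨k + 1, Fin.snoc p j, Fin.strictMono_snoc hp (hlast ▸ hij), ?_, Fin.snoc_last _ _,
    ?_, ?_⟩
  · simpa only [← Fin.castSucc_zero, Fin.snoc_castSucc] using h0
  · intro t
    induction t using Fin.lastCases with
    | last => simpa only [Fin.snoc_last] using hjn
    | cast s => simpa only [Fin.snoc_castSucc] using hle s
  · simp only [Fin.sum_univ_castSucc (n := k), Fin.succ_castSucc, Fin.snoc_castSucc,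
      Fin.succ_last, Fin.snoc_last, hlast]

lemma exists_add_of_mem_pathWeights {j : ℕ} {x : ℝ} (hx : x ∈ pathWeights n w j)
    (hj : 0 < j) :
    ∃ i < j, ∃ y ∈ pathWeights n w i, x = y + w i j := by
  obtain ⟨k, p, hp, h0, hlast, hle, rfl⟩ := hx
  obtain ⟨m, rfl⟩ : ∃ m, k = m + 1 :=
    Nat.exists_eq_succ_of_ne_zero fun hk => by subst hk; exact hj.ne' (hlast.symm.trans h0)
  refine ⟨p (Fin.last m).castSucc, hlast ▸ hp (Fin.castSucc_lt_last _), _,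
    ⟨m, Fin.init p, hp.comp Fin.strictMono_castSucc, h0, rfl, fun t => hle _, rfl⟩, ?_⟩
  simp only [Fin.sum_univ_castSucc (n := m), Fin.succ_last, hlast, Fin.init, Fin.succ_castSucc]

lemma setOf_eq_pathWeights {j : ℕ} (hj : 1 ≤ j) :
    {x : ℝ | ∃ k : ℕ, 1 ≤ k ∧ ∃ p : Fin (k+1) → ℕ,
      StrictMono p ∧ p 0 = 0 ∧ p (Fin.last k) = j ∧ (∀ t, p t ≤ n) ∧
      x = ∑ t : Fin k, w (p t.castSucc) (p t.succ)} = pathWeights n w j := by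
  ext x
  constructor
  · rintro ⟨k, -, hpath⟩
    exact ⟨k, hpath⟩
  · rintro ⟨k, p, hp, h0, hlast, hpath⟩
    refine ⟨k, Nat.one_le_iff_ne_zero.mpr fun hk => ?_, p, hp, h0, hlast, hpath⟩
    subst hk
    exact Nat.one_le_iff_ne_zero.mp hj (hlast.symm.trans h0)

theorem isLeast_pathWeights_of_recurrence (D : Fin (n+1) → ℝ)
    (hD : ∀ j : Fin (n+1), 1 ≤ (j : ℕ) →
      IsLeast {x : ℝ | ∃ i : Fin (n+1), i < j ∧ x = D i + w i j} (D j))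
    (j : Fin (n+1)) : IsLeast (pathWeights n w j) (D j - D 0) := by
  induction j using WellFoundedLT.induction with
  | _ j ih =>
  rcases Nat.eq_zero_or_pos j with hj | hj
  · obtain rfl : j = 0 := Fin.ext hj
    simp [pathWeights_zero]
  obtain ⟨⟨i, hij, hDj⟩, hmin⟩ := hD j hj
  refine ⟨?_, fun x hx => ?_⟩
  · have := add_mem_pathWeights (ih i hij).1 hij (Nat.lt_succ_iff.mp j.isLt)
    rwa [hDj, add_sub_right_comm]
  · obtain ⟨i, hij, y, hy, rfl⟩ := exists_add_of_mem_pathWeights hx hj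
    have hi : i < n + 1 := hij.trans j.isLt
    have hDy := (ih ⟨i, hi⟩ hij).2 hy
    have hDj := hmin ⟨⟨i, hi⟩, hij, rfl⟩
    linarith

end

theorem stmt0_general (n : ℕ) (w : ℕ → ℕ → ℝ) (D : Fin (n+1) → ℝ)
    (hD : ∀ j : Fin (n+1), 1 ≤ (j : ℕ) →
      IsLeast {x : ℝ | ∃ i : Fin (n+1), i < j ∧ x = D i + w i j} (D j)) :
    ∀ j : Fin (n+1), 1 ≤ (j : ℕ) →
      IsLeast {x : ℝ | ∃ k : ℕ, 1 ≤ k ∧ ∃ p : Fin (k+1) → ℕ,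
          StrictMono p ∧ p 0 = 0 ∧ p (Fin.last k) = (j : ℕ) ∧ (∀ t, p t ≤ n) ∧
          x = ∑ t : Fin k, w (p t.castSucc) (p t.succ)}
        (D j - D 0) := by
  intro j hj
  rw [setOf_eq_pathWeights hj]
  exact isLeast_pathWeights_of_recurrence D hD j

/-- For `D` satisfying the 1D (least-weight-subsequence) recurrence,
`D j - D 0` is the minimum, over all strictly increasing sequences
`0 = i₀ < i₁ < ⋯ < i_k = j` (with `k ≥ 1`, terms `≤ n`), of `∑ w i_t i_{t+1}`. -/
theorem stmt0 (n : ℕ) (hn : 1 ≤ n) (w : ℕ → ℕ → ℝ) (D : Fin (n+1) → ℝ)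
    (hD : ∀ j : Fin (n+1), 1 ≤ (j : ℕ) →
      IsLeast {x : ℝ | ∃ i : Fin (n+1), i < j ∧ x = D i + w i j} (D j)) :
    ∀ j : Fin (n+1), 1 ≤ (j : ℕ) →
      IsLeast {x : ℝ | ∃ k : ℕ, 1 ≤ k ∧ ∃ p : Fin (k+1) → ℕ,
          StrictMono p ∧ p 0 = 0 ∧ p (Fin.last k) = (j : ℕ) ∧ (∀ t, p t ≤ n) ∧
          x = ∑ t : Fin k, w (p t.castSucc) (p t.succ)}
        (D j - D 0) :=
  stmt0_general n w D hD
end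

section
/- Let n : ℕ and let H : Matrix (Fin (n+1)) (Fin (n+1)) T satisfy H i i = 1 for all i and H i j = 0 (i.e., +∞) whenever i > j (H is upper triangular with tropical-unit diagonal). Then the tropical powers of H stabilize at exponent n: H^m = H^n for every m ≥ n. (Consequently the closure H* := lim H^m exists and equals H^n.) -/
/-!
With tropical unit diagonal, `(H ^ (k + 1)) i j = min_r (H i r + (H ^ k) r j) ≤ (H ^ k) i j`, so the
powers decrease entrywise. Upper triangularity means only indices `r ≥ i` contribute to row `i`,
and induction on the number of indices above `i` gives the reverse inequality
`(H ^ k) i j ≤ (H ^ (k + 1)) i j` once `k` reaches that number, which is at most `n`.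
-/

open Finset

namespace Tropical

variable {R S : Type*} [LinearOrder R] [OrderTop R]

theorem sum_le_of_mem {s : Finset S} (f : S → Tropical R) {a : S} (ha : a ∈ s) :
    ∑ r ∈ s, f r ≤ f a := by
  rw [← untrop_le_iff, Finset.untrop_sum']
  exact Finset.inf_le ha

theorem le_sum_iff {s : Finset S} {f : S → Tropical R} {x : Tropical R} :
    x ≤ ∑ r ∈ s, f r ↔ ∀ r ∈ s, x ≤ f r := by
  rw [← untrop_le_iff, Finset.untrop_sum', Finset.le_inf_iff]
  rfl

end Tropical

namespace Matrix

open Tropical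

variable {R ι : Type*} [LinearOrderedAddCommMonoidWithTop R] [Fintype ι]
  {H M : Matrix ι ι (Tropical R)}

theorem tropical_mul_apply_le_of_diag_eq_one (hdiag : ∀ i, H i i = 1) (i j : ι) :
    (H * M) i j ≤ M i j := by
  simpa [mul_apply, hdiag] using sum_le_of_mem (fun r => H i r * M r j) (mem_univ i)

variable [LinearOrder ι]

theorem tropical_le_mul_apply_of_blockTriangular (hH : H.BlockTriangular id)
    (hdiag : ∀ i, H i i = 1) {i j : ι} (h : ∀ r, i < r → M i j ≤ H i r * M r j) :
    M i j ≤ (H * M) i j := by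
  refine mul_apply (M := H) ▸ le_sum_iff.2 fun r _ => ?_
  rcases lt_trichotomy r i with hri | rfl | hir
  · rw [hH hri, zero_mul]
    exact le_zero _
  · rw [hdiag, one_mul]
  · exact h r hir

theorem tropical_pow_apply_le_pow_succ_apply [LocallyFiniteOrderTop ι]
    (hH : H.BlockTriangular id) (hdiag : ∀ i, H i i = 1) :
    ∀ (k : ℕ) (i j : ι), #(Ioi i) ≤ k → (H ^ k) i j ≤ (H ^ (k + 1)) i j := by
  intro k
  induction k with
  | zero =>
    intro i j hi
    rw [pow_succ']
    refine tropical_le_mul_apply_of_blockTriangular hH hdiag fun r hir => ?_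
    have := card_pos.2 ⟨r, mem_Ioi.2 hir⟩
    omega
  | succ k ih =>
    intro i j hi
    rw [pow_succ' H (k + 1)]
    refine tropical_le_mul_apply_of_blockTriangular hH hdiag fun r hir => ?_
    have hr : #(Ioi r) ≤ k := by
      have := card_lt_card (Ioi_ssubset_Ioi hir)
      omega
    calc (H ^ (k + 1)) i j ≤ H i r * (H ^ k) r j := by
          rw [pow_succ']
          exact sum_le_of_mem (fun r => H i r * (H ^ k) r j) (mem_univ r)
      _ ≤ H i r * (H ^ (k + 1)) r j := by gcongr; exact ih r j hr

theorem tropical_pow_succ_eq_pow [LocallyFiniteOrderTop ι] (hH : H.BlockTriangular id)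
    (hdiag : ∀ i, H i i = 1) {k : ℕ} (hk : Fintype.card ι ≤ k + 1) : H ^ (k + 1) = H ^ k := by
  ext i j
  have hi : #(Ioi i) ≤ k := by
    have := card_lt_univ_of_notMem (notMem_Ioi_self (b := i))
    omega
  exact le_antisymm (pow_succ' H k ▸ tropical_mul_apply_le_of_diag_eq_one hdiag i j)
    (tropical_pow_apply_le_pow_succ_apply hH hdiag k i j hi)

theorem tropical_pow_eq_pow_of_le [LocallyFiniteOrderTop ι] (hH : H.BlockTriangular id)
    (hdiag : ∀ i, H i i = 1) {k : ℕ} (hk : Fintype.card ι ≤ k + 1) {m : ℕ} (hkm : k ≤ m) :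
    H ^ m = H ^ k := by
  induction m, hkm using Nat.le_induction with
  | base => rfl
  | succ m hkm ih => rw [tropical_pow_succ_eq_pow hH hdiag (hk.trans (by omega)), ih]

end Matrix

/-- An upper-triangular tropical matrix with tropical-unit diagonal
on `Fin (n+1)` has powers stabilizing at exponent `n`: `H^m = H^n` for `m ≥ n`. -/
theorem stmt3 (n : ℕ)
    (H : Matrix (Fin (n+1)) (Fin (n+1)) (Tropical (WithTop ℝ)))
    (hdiag : ∀ i, H i i = 1)
    (hlow : ∀ i j : Fin (n+1), j < i → H i j = 0) :
    ∀ m : ℕ, n ≤ m → H ^ m = H ^ n :=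
  fun _ hm => Matrix.tropical_pow_eq_pow_of_le (fun i j => hlow i j) hdiag
    (Fintype.card_fin _).le hm
end

section
/- Let n ≥ 1, w : ℕ → ℕ → ℝ, let D : Fin (n+1) → ℝ satisfy the 1D recurrence, and let H be the associated 1D tropical matrix. Then for every j with 1 ≤ j ≤ n, (H^n) 0 j = trop ↑(D j − D 0). That is, solving the 1D recurrence reduces to computing the n-th tropical power (closure) of H: the top row of H^n gives the values D j − D 0. -/
/-!
`D` is a feasible potential for `H`: `D j - D i ≤ H i j` for all `i, j`, which is the recurrence's
`D j ≤ D i + w i j` above the diagonal and trivial elsewhere. Potentials are preserved by tropical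
matrix products, so `D j - D 0 ≤ (H ^ n) 0 j`. Conversely, following the minimising predecessors
from `j` back to `0` gives a path of at most `j ≤ n` edges of weight exactly `D j - D 0`, padded by
the diagonal entries `H 0 0 = 1`.
-/

open Tropical Matrix

/-- A feasible dual solution of the shortest-path problem with edge weights `A`. -/
def Matrix.IsTropicalPotential {ι : Type*} (φ : ι → ℝ) (A : Matrix ι ι (Tropical (WithTop ℝ))) :
    Prop :=
  ∀ i j, ((φ j - φ i : ℝ) : WithTop ℝ) ≤ untrop (A i j)

namespace Matrix.IsTropicalPotential

variable {ι : Type*} {φ : ι → ℝ}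

theorem one [DecidableEq ι] : IsTropicalPotential φ (1 : Matrix ι ι (Tropical (WithTop ℝ))) := by
  intro i j
  rcases eq_or_ne i j with rfl | h
  · simp
  · simp [h]

theorem mul [Fintype ι] {A B : Matrix ι ι (Tropical (WithTop ℝ))} (hA : IsTropicalPotential φ A)
    (hB : IsTropicalPotential φ B) : IsTropicalPotential φ (A * B) := by
  intro i j
  rw [mul_apply, Finset.untrop_sum']
  refine Finset.le_inf fun m _ => ?_
  calc ((φ j - φ i : ℝ) : WithTop ℝ)
        = ((φ m - φ i : ℝ) : WithTop ℝ) + ((φ j - φ m : ℝ) : WithTop ℝ) := by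
        rw [← WithTop.coe_add, sub_add_sub_cancel']
    _ ≤ untrop (A i m * B m j) := by
        rw [untrop_mul]
        exact add_le_add (hA i m) (hB m j)

theorem pow [Fintype ι] [DecidableEq ι] {A : Matrix ι ι (Tropical (WithTop ℝ))}
    (hA : IsTropicalPotential φ A) (k : ℕ) :
    IsTropicalPotential φ (A ^ k) := by
  induction k with
  | zero => exact one
  | succ k ih => exact pow_succ A k ▸ ih.mul hA

theorem of_upperTriangular [LinearOrder ι] {A : Matrix ι ι (Tropical (WithTop ℝ))}
    (hdiag : ∀ i, A i i = 1) (hlow : ∀ i j, j < i → A i j = 0)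
    (hup : ∀ i j, i < j → ((φ j - φ i : ℝ) : WithTop ℝ) ≤ untrop (A i j)) :
    IsTropicalPotential φ A := by
  intro i j
  rcases lt_trichotomy i j with h | rfl | h
  · exact hup i j h
  · simp [hdiag]
  · simp [hlow i j h]

end Matrix.IsTropicalPotential

theorem Matrix.untrop_mul_apply_le {ι : Type*} [Fintype ι]
    (A B : Matrix ι ι (Tropical (WithTop ℝ))) (i m j : ι) :
    untrop ((A * B) i j) ≤ untrop (A i m) + untrop (B m j) := by
  rw [mul_apply, Finset.untrop_sum', ← untrop_mul]
  exact Finset.inf_le (Finset.mem_univ m)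

theorem Matrix.untrop_pow_zero_apply_le {n : ℕ}
    (A : Matrix (Fin (n+1)) (Fin (n+1)) (Tropical (WithTop ℝ))) (φ : Fin (n+1) → ℝ) (h00 : untrop (A 0 0) ≤ 0)
    (hpred : ∀ j : Fin (n+1), 1 ≤ (j : ℕ) →
      ∃ i < j, untrop (A i j) ≤ ((φ j - φ i : ℝ) : WithTop ℝ)) :
    ∀ k (j : Fin (n+1)), (j : ℕ) ≤ k → untrop ((A ^ k) 0 j) ≤ ((φ j - φ 0 : ℝ) : WithTop ℝ) := by
  intro k
  induction k with
  | zero =>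
    intro j hj
    obtain rfl : j = 0 := Fin.ext (Nat.le_zero.mp hj)
    simp
  | succ k ih =>
    intro j hj
    rw [pow_succ]
    by_cases hj0 : 1 ≤ (j : ℕ)
    · obtain ⟨i, hij, hi⟩ := hpred j hj0
      calc untrop ((A ^ k * A) 0 j) ≤ untrop ((A ^ k) 0 i) + untrop (A i j) :=
            untrop_mul_apply_le _ _ _ _ _
        _ ≤ ((φ i - φ 0 : ℝ) : WithTop ℝ) + ((φ j - φ i : ℝ) : WithTop ℝ) :=
            add_le_add (ih i (by omega)) hi
        _ = ((φ j - φ 0 : ℝ) : WithTop ℝ) := by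
            rw [← WithTop.coe_add, sub_add_sub_cancel']
    · obtain rfl : j = 0 := Fin.ext (by rw [Fin.val_zero]; omega)
      calc untrop ((A ^ k * A) 0 0) ≤ untrop ((A ^ k) 0 0) + untrop (A 0 0) :=
            untrop_mul_apply_le _ _ _ _ _
        _ ≤ ((φ 0 - φ 0 : ℝ) : WithTop ℝ) + 0 := add_le_add (ih 0 (by simp)) h00
        _ = ((φ 0 - φ 0 : ℝ) : WithTop ℝ) := add_zero _

theorem stmt4_general (n : ℕ) (w : ℕ → ℕ → ℝ) (D : Fin (n+1) → ℝ)
    (hD : ∀ j : Fin (n+1), 1 ≤ (j : ℕ) →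
      IsLeast {x : ℝ | ∃ i : Fin (n+1), i < j ∧ x = D i + w i j} (D j))
    (H : Matrix (Fin (n+1)) (Fin (n+1)) (Tropical (WithTop ℝ)))
    (hdiag : ∀ i, H i i = 1)
    (hup : ∀ i j : Fin (n+1), i < j →
      H i j = Tropical.trop ((w i j : ℝ) : WithTop ℝ))
    (hlow : ∀ i j : Fin (n+1), j < i → H i j = 0) :
    ∀ j : Fin (n+1), 1 ≤ (j : ℕ) →
      (H ^ n) 0 j = Tropical.trop ((D j - D 0 : ℝ) : WithTop ℝ) := by
  have hpot : H.IsTropicalPotential D := by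
    refine .of_upperTriangular hdiag hlow fun i j hij => ?_
    have := (hD j (by omega)).2 ⟨i, hij, rfl⟩
    rw [hup i j hij, untrop_trop]
    exact_mod_cast (by linarith : D j - D i ≤ w i j)
  have hpred : ∀ j : Fin (n+1), 1 ≤ (j : ℕ) →
      ∃ i < j, untrop (H i j) ≤ ((D j - D i : ℝ) : WithTop ℝ) := by
    intro j hj
    obtain ⟨i, hij, hDj⟩ := (hD j hj).1
    refine ⟨i, hij, ?_⟩
    rw [hup i j hij, untrop_trop, hDj, add_sub_cancel_left]
  intro j _
  apply untrop_injective
  rw [untrop_trop]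
  exact le_antisymm
    (H.untrop_pow_zero_apply_le D (by simp [hdiag]) hpred n j (by omega)) (hpot.pow n 0 j)

/-- If `D` satisfies the 1D recurrence and `H` is the associated
1D tropical matrix, then the top row of the closure `H^n` gives the values
`D j - D 0`: `(H^n) 0 j = trop (D j - D 0)` for `1 ≤ j ≤ n`. -/
theorem stmt4 (n : ℕ) (hn : 1 ≤ n) (w : ℕ → ℕ → ℝ) (D : Fin (n+1) → ℝ)
    (hD : ∀ j : Fin (n+1), 1 ≤ (j : ℕ) →
      IsLeast {x : ℝ | ∃ i : Fin (n+1), i < j ∧ x = D i + w i j} (D j))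
    (H : Matrix (Fin (n+1)) (Fin (n+1)) (Tropical (WithTop ℝ)))
    (hdiag : ∀ i, H i i = 1)
    (hup : ∀ i j : Fin (n+1), i < j →
      H i j = Tropical.trop ((w i j : ℝ) : WithTop ℝ))
    (hlow : ∀ i j : Fin (n+1), j < i → H i j = 0) :
    ∀ j : Fin (n+1), 1 ≤ (j : ℕ) →
      (H ^ n) 0 j = Tropical.trop ((D j - D 0 : ℝ) : WithTop ℝ) :=
  stmt4_general n w D hD H hdiag hup hlow
end

section
/- Let m, n ≥ 1, let w, w', s : ℕ → ℕ → ℝ, and let D : Fin (m+1) → Fin (n+1) → ℝ satisfy the GAP recurrence. Then for every i ≤ m and j ≤ n, D i j equals the minimum, over all GAP paths from (0,0) to (i,j), of the weight of the path. (The set of GAP paths to any reachable cell (i,j) is finite and nonempty, so the minimum exists.) -/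
/-! Every GAP step strictly increases `i + j` and never decreases a coordinate, so the last step
of a path to `(i, j)` starts inside the grid, and the values over which the recurrence minimises
at `(i, j)` are exactly `D a b + (weight of the step (a, b) → (i, j))`. Induction on path length
then shows that `D i j` bounds every path weight from below, and strong induction on `i + j`,
retracing a term attaining the minimum, builds a path of weight `D i j`. -/

/-- A single step of a GAP path: a diagonal step `(p,q) → (p+1,q+1)`,
a horizontal step `(p,q) → (p,q')` with `q < q'`, or a vertical step
`(p,q) → (p',q)` with `p < p'`. -/
def IsGapStep (u v : ℕ × ℕ) : Prop :=
  (v.1 = u.1 + 1 ∧ v.2 = u.2 + 1) ∨ (v.1 = u.1 ∧ u.2 < v.2) ∨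
    (v.2 = u.2 ∧ u.1 < v.1)

/-- The weight of a GAP step: `s p' q'` for a diagonal step to `(p',q')`,
`w q q'` for a horizontal step, and `w' p p'` for a vertical step. -/
def gapStepWeight (w w' s : ℕ → ℕ → ℝ) (u v : ℕ × ℕ) : ℝ :=
  if v.1 = u.1 + 1 ∧ v.2 = u.2 + 1 then s v.1 v.2
  else if v.1 = u.1 then w u.2 v.2
  else w' u.1 v.1

structure IsGapPath {k : ℕ} (v : Fin (k+1) → ℕ × ℕ) (e : ℕ × ℕ) : Prop where
  start : v 0 = (0, 0)
  finish : v (Fin.last k) = e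
  step : ∀ t : Fin k, IsGapStep (v t.castSucc) (v t.succ)

def gapPathWeight (w w' s : ℕ → ℕ → ℝ) {k : ℕ} (v : Fin (k+1) → ℕ × ℕ) : ℝ :=
  ∑ t : Fin k, gapStepWeight w w' s (v t.castSucc) (v t.succ)

def gapRecurrenceValues {m n : ℕ} (w w' s : ℕ → ℕ → ℝ) (D : Fin (m+1) → Fin (n+1) → ℝ)
    (i : Fin (m+1)) (j : Fin (n+1)) : Set ℝ :=
  {x : ℝ |
    (∃ (i' : Fin (m+1)) (j' : Fin (n+1)),
      (i' : ℕ) + 1 = (i : ℕ) ∧ (j' : ℕ) + 1 = (j : ℕ) ∧ x = D i' j' + s i j) ∨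
    (∃ q : Fin (n+1), q < j ∧ x = D i q + w q j) ∨
    (∃ p : Fin (m+1), p < i ∧ x = D p j + w' p i)}

section Steps

variable {w w' s : ℕ → ℕ → ℝ}

theorem IsGapStep.fst_le {u v : ℕ × ℕ} (h : IsGapStep u v) : u.1 ≤ v.1 := by
  rcases h with ⟨_, _⟩ | ⟨_, _⟩ | ⟨_, _⟩ <;> omega

theorem IsGapStep.snd_le {u v : ℕ × ℕ} (h : IsGapStep u v) : u.2 ≤ v.2 := by
  rcases h with ⟨_, _⟩ | ⟨_, _⟩ | ⟨_, _⟩ <;> omega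

theorem IsGapStep.add_lt {u v : ℕ × ℕ} (h : IsGapStep u v) : u.1 + u.2 < v.1 + v.2 := by
  rcases h with ⟨_, _⟩ | ⟨_, _⟩ | ⟨_, _⟩ <;> omega

theorem gapStepWeight_diag (p q : ℕ) :
    gapStepWeight w w' s (p, q) (p + 1, q + 1) = s (p + 1) (q + 1) :=
  if_pos ⟨rfl, rfl⟩

theorem gapStepWeight_horiz (p q q' : ℕ) : gapStepWeight w w' s (p, q) (p, q') = w q q' := by
  simp [gapStepWeight]

theorem gapStepWeight_vert {p p' : ℕ} (q : ℕ) (h : p < p') :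
    gapStepWeight w w' s (p, q) (p', q) = w' p p' := by
  simp [gapStepWeight, h.ne']

end Steps

section Paths

variable {w w' s : ℕ → ℕ → ℝ}

theorem isGapPath_const_zero : IsGapPath (fun _ : Fin 1 => ((0, 0) : ℕ × ℕ)) (0, 0) :=
  ⟨rfl, rfl, fun t => t.elim0⟩

theorem IsGapPath.eq_zero_of_length_zero {v : Fin 1 → ℕ × ℕ} {e : ℕ × ℕ} (hv : IsGapPath v e) :
    e = (0, 0) :=
  hv.finish.symm.trans hv.start

theorem IsGapPath.snoc {k : ℕ} {v : Fin (k+1) → ℕ × ℕ} {e e' : ℕ × ℕ} (hv : IsGapPath v e)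
    (he : IsGapStep e e') : IsGapPath (Fin.snoc v e' : Fin (k+2) → ℕ × ℕ) e' := by
  refine ⟨?_, Fin.snoc_last .., fun t => Fin.lastCases ?_ (fun t => ?_) t⟩
  · rw [← Fin.castSucc_zero, Fin.snoc_castSucc, hv.start]
  · rwa [Fin.succ_last, Fin.snoc_castSucc, Fin.snoc_last, hv.finish]
  · rw [Fin.succ_castSucc, Fin.snoc_castSucc, Fin.snoc_castSucc]
    exact hv.step t

theorem IsGapPath.init {k : ℕ} {v : Fin (k+2) → ℕ × ℕ} {e : ℕ × ℕ} (hv : IsGapPath v e) :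
    IsGapPath (Fin.init v) (v (Fin.last k).castSucc) ∧ IsGapStep (v (Fin.last k).castSucc) e := by
  refine ⟨⟨hv.start, rfl, fun t => ?_⟩, ?_⟩
  · simpa only [Fin.init, Fin.succ_castSucc] using hv.step t.castSucc
  · simpa only [Fin.succ_last, hv.finish] using hv.step (Fin.last k)

theorem gapPathWeight_succ {k : ℕ} (v : Fin (k+2) → ℕ × ℕ) :
    gapPathWeight w w' s v = gapPathWeight w w' s (Fin.init v) +
      gapStepWeight w w' s (v (Fin.last k).castSucc) (v (Fin.last (k+1))) := by
  rw [gapPathWeight, Fin.sum_univ_castSucc, Fin.succ_last]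
  rfl

theorem gapPathWeight_snoc {k : ℕ} (v : Fin (k+1) → ℕ × ℕ) (e : ℕ × ℕ) :
    gapPathWeight w w' s (Fin.snoc v e : Fin (k+2) → ℕ × ℕ) =
      gapPathWeight w w' s v + gapStepWeight w w' s (v (Fin.last k)) e := by
  rw [gapPathWeight_succ, Fin.init_snoc, Fin.snoc_castSucc, Fin.snoc_last]

end Paths

section Recurrence

variable {m n : ℕ} {w w' s : ℕ → ℕ → ℝ} {D : Fin (m+1) → Fin (n+1) → ℝ}

theorem mem_gapRecurrenceValues_iff {i : Fin (m+1)} {j : Fin (n+1)} {x : ℝ} :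
    x ∈ gapRecurrenceValues w w' s D i j ↔ ∃ (a : Fin (m+1)) (b : Fin (n+1)),
      IsGapStep (a, b) (i, j) ∧ x = D a b + gapStepWeight w w' s (a, b) (i, j) := by
  constructor
  · rintro (⟨a, b, ha, hb, rfl⟩ | ⟨b, hb, rfl⟩ | ⟨a, ha, rfl⟩)
    · refine ⟨a, b, Or.inl ⟨ha.symm, hb.symm⟩, ?_⟩
      rw [← ha, ← hb, gapStepWeight_diag]
    · exact ⟨i, b, Or.inr (Or.inl ⟨rfl, hb⟩), by rw [gapStepWeight_horiz]⟩
    · exact ⟨a, j, Or.inr (Or.inr ⟨rfl, ha⟩), by rw [gapStepWeight_vert _ ha]⟩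
  · rintro ⟨a, b, ⟨hi, hj⟩ | ⟨hi, hb⟩ | ⟨hj, ha⟩, rfl⟩
    · refine Or.inl ⟨a, b, hi.symm, hj.symm, ?_⟩
      simp only at hi hj
      rw [hi, hj, gapStepWeight_diag]
    · obtain rfl : a = i := Fin.ext hi.symm
      exact Or.inr (Or.inl ⟨b, hb, by rw [gapStepWeight_horiz]⟩)
    · obtain rfl : b = j := Fin.ext hj.symm
      exact Or.inr (Or.inr ⟨a, ha, by rw [gapStepWeight_vert _ ha]⟩)

theorem le_gapPathWeight {k : ℕ} {v : Fin (k+1) → ℕ × ℕ} {i : Fin (m+1)} {j : Fin (n+1)}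
    (hD0 : D 0 0 ≤ 0)
    (hD : ∀ i j, ¬(i = 0 ∧ j = 0) → D i j ∈ lowerBounds (gapRecurrenceValues w w' s D i j))
    (hv : IsGapPath v (i, j)) : D i j ≤ gapPathWeight w w' s v := by
  induction k generalizing i j with
  | zero =>
    obtain ⟨hi, hj⟩ := Prod.ext_iff.mp hv.eq_zero_of_length_zero
    obtain rfl : i = 0 := Fin.ext hi
    obtain rfl : j = 0 := Fin.ext hj
    simpa [gapPathWeight] using hD0
  | succ k ih =>
    obtain ⟨hinit, hstep⟩ := hv.init
    set u := v (Fin.last k).castSucc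
    have hi : u.1 < m + 1 := hstep.fst_le.trans_lt i.isLt
    have hj : u.2 < n + 1 := hstep.snd_le.trans_lt j.isLt
    have hne : ¬(i = 0 ∧ j = 0) := by
      rintro ⟨rfl, rfl⟩
      exact absurd hstep.add_lt (by simp)
    have hmem : D ⟨u.1, hi⟩ ⟨u.2, hj⟩ + gapStepWeight w w' s u (i, j) ∈
        gapRecurrenceValues w w' s D i j := mem_gapRecurrenceValues_iff.mpr ⟨_, _, hstep, rfl⟩
    calc D i j ≤ D ⟨u.1, hi⟩ ⟨u.2, hj⟩ + gapStepWeight w w' s u (i, j) := hD i j hne hmem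
      _ ≤ gapPathWeight w w' s (Fin.init v) + gapStepWeight w w' s u (i, j) :=
        by gcongr; exact ih hinit
      _ = gapPathWeight w w' s v := by rw [gapPathWeight_succ, hv.finish]

theorem exists_isGapPath_gapPathWeight_eq (hD0 : D 0 0 = 0)
    (hD : ∀ i j, ¬(i = 0 ∧ j = 0) → D i j ∈ gapRecurrenceValues w w' s D i j)
    (i : Fin (m+1)) (j : Fin (n+1)) :
    ∃ (k : ℕ) (v : Fin (k+1) → ℕ × ℕ), IsGapPath v (i, j) ∧ D i j = gapPathWeight w w' s v := by
  induction hN : (i : ℕ) + j using Nat.strong_induction_on generalizing i j with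
  | _ N ih =>
    by_cases h0 : i = 0 ∧ j = 0
    · obtain ⟨rfl, rfl⟩ := h0
      exact ⟨0, _, isGapPath_const_zero, by simp [hD0, gapPathWeight]⟩
    obtain ⟨a, b, hstep, hx⟩ := mem_gapRecurrenceValues_iff.mp (hD i j h0)
    obtain ⟨k, v, hv, hw⟩ := ih _ (hN ▸ hstep.add_lt) a b rfl
    refine ⟨k + 1, _, hv.snoc hstep, ?_⟩
    rw [gapPathWeight_snoc, ← hw, hv.finish, hx]

end Recurrence

theorem stmt7_general (m n : ℕ) (w w' s : ℕ → ℕ → ℝ)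
    (D : Fin (m+1) → Fin (n+1) → ℝ)
    (hD0 : D 0 0 = 0)
    (hD : ∀ (i : Fin (m+1)) (j : Fin (n+1)), ¬(i = 0 ∧ j = 0) →
      IsLeast {x : ℝ |
        (∃ (i' : Fin (m+1)) (j' : Fin (n+1)),
          (i' : ℕ) + 1 = (i : ℕ) ∧ (j' : ℕ) + 1 = (j : ℕ) ∧
          x = D i' j' + s i j) ∨
        (∃ q : Fin (n+1), q < j ∧ x = D i q + w q j) ∨
        (∃ p : Fin (m+1), p < i ∧ x = D p j + w' p i)} (D i j)) :
    ∀ (i : Fin (m+1)) (j : Fin (n+1)),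
      IsLeast {x : ℝ | ∃ k : ℕ, ∃ v : Fin (k+1) → ℕ × ℕ,
        v 0 = (0, 0) ∧ v (Fin.last k) = ((i : ℕ), (j : ℕ)) ∧
        (∀ t : Fin k, IsGapStep (v t.castSucc) (v t.succ)) ∧
        x = ∑ t : Fin k, gapStepWeight w w' s (v t.castSucc) (v t.succ)}
      (D i j) := by
  intro i j
  refine ⟨?_, ?_⟩
  · obtain ⟨k, v, hv, hw⟩ :=
      exists_isGapPath_gapPathWeight_eq hD0 (fun i j h => (hD i j h).1) i j
    exact ⟨k, v, hv.start, hv.finish, hv.step, hw⟩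
  · rintro x ⟨k, v, h0, hlast, hsteps, rfl⟩
    exact le_gapPathWeight hD0.le (fun i j h => (hD i j h).2) ⟨h0, hlast, hsteps⟩

/-- If `D` satisfies the GAP recurrence, then `D i j` is the
minimum, over all GAP paths from `(0,0)` to `(i,j)`, of the weight of the
path (the sum of its step weights). -/
theorem stmt7 (m n : ℕ) (hm : 1 ≤ m) (hn : 1 ≤ n) (w w' s : ℕ → ℕ → ℝ)
    (D : Fin (m+1) → Fin (n+1) → ℝ)
    (hD0 : D 0 0 = 0)
    (hD : ∀ (i : Fin (m+1)) (j : Fin (n+1)), ¬(i = 0 ∧ j = 0) →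
      IsLeast {x : ℝ |
        (∃ (i' : Fin (m+1)) (j' : Fin (n+1)),
          (i' : ℕ) + 1 = (i : ℕ) ∧ (j' : ℕ) + 1 = (j : ℕ) ∧
          x = D i' j' + s i j) ∨
        (∃ q : Fin (n+1), q < j ∧ x = D i q + w q j) ∨
        (∃ p : Fin (m+1), p < i ∧ x = D p j + w' p i)} (D i j)) :
    ∀ (i : Fin (m+1)) (j : Fin (n+1)),
      IsLeast {x : ℝ | ∃ k : ℕ, ∃ v : Fin (k+1) → ℕ × ℕ,
        v 0 = (0, 0) ∧ v (Fin.last k) = ((i : ℕ), (j : ℕ)) ∧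
        (∀ t : Fin k, IsGapStep (v t.castSucc) (v t.succ)) ∧
        x = ∑ t : Fin k, gapStepWeight w w' s (v t.castSucc) (v t.succ)}
      (D i j) :=
  stmt7_general m n w w' s D hD0 hD
end

section
/- Let m, n : ℕ and let H : Matrix (Fin (m+1) × Fin (n+1)) (Fin (m+1) × Fin (n+1)) T be GAP-structured. Then the tropical powers of H stabilize at exponent L := min m n, i.e., H^k = H^L for every k ≥ L. (Hence the closure H* exists and equals H^{min m n}.) -/
/-!
Write `H = 1 + N`, where `N` is `H` with its diagonal replaced by `0 = ∞`. Since tropical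
addition is idempotent, the binomial expansion collapses to `(1 + N) ^ k = ∑_{j ≤ k} N ^ j`.
A nonzero entry `N u v` forces both coordinates to increase strictly from `u` to `v`, so a
nonzero entry of `N ^ j` raises `min u.1 u.2` by at least `j`; as this quantity never exceeds
`min m n`, we get `N ^ (min m n + 1) = 0` and the sums stop growing at `k = min m n`.
-/

open Finset

section IdempotentAddition

variable {R : Type*} [Semiring R]

theorem one_add_pow_eq_sum_range_pow (hidem : ∀ a : R, a + a = a) (x : R) (k : ℕ) :
    (1 + x) ^ k = ∑ j ∈ range (k + 1), x ^ j := by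
  induction k with
  | zero => simp
  | succ k ih =>
    set A := ∑ j ∈ range k, x ^ (j + 1)
    have hS : ∑ j ∈ range (k + 1), x ^ j = A + 1 := by
      rw [sum_range_succ', pow_zero]
    have hSx : (∑ j ∈ range (k + 1), x ^ j) * x = A + x ^ (k + 1) := by
      rw [sum_mul, sum_range_succ]
      simp only [← pow_succ]
      rfl
    calc (1 + x) ^ (k + 1) = (A + A) + 1 + x ^ (k + 1) := by
          rw [pow_succ, ih, mul_add, mul_one, hSx, hS]
          abel
      _ = ∑ j ∈ range (k + 1 + 1), x ^ j := by rw [hidem, sum_range_succ _ (k + 1), hS]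

theorem one_add_pow_eq_of_pow_succ_eq_zero (hidem : ∀ a : R, a + a = a) {x : R} {L : ℕ}
    (hx : x ^ (L + 1) = 0) {k : ℕ} (hk : L ≤ k) : (1 + x) ^ k = (1 + x) ^ L := by
  rw [one_add_pow_eq_sum_range_pow hidem, one_add_pow_eq_sum_range_pow hidem]
  refine (sum_subset (range_subset_range.mpr (by omega)) fun j _ hjL => ?_).symm
  exact pow_eq_zero_of_le (by simpa using hjL) hx

end IdempotentAddition

namespace Matrix

variable {ι R : Type*} [DecidableEq ι]

section Semiring

variable [Semiring R]

theorem le_of_pow_apply_ne_zero [Fintype ι] {N : Matrix ι ι R} {f : ι → ℕ}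
    (hN : ∀ u v, N u v ≠ 0 → f u < f v) (i : ℕ) {u v : ι} (h : (N ^ i) u v ≠ 0) :
    f u + i ≤ f v := by
  induction i generalizing u with
  | zero =>
    obtain rfl : u = v := by
      by_contra hne
      exact h (one_apply_ne hne)
    simp
  | succ i ih =>
    rw [pow_succ', mul_apply] at h
    obtain ⟨r, -, hr⟩ := exists_ne_zero_of_sum_ne_zero h
    have hur := hN u r (left_ne_zero_of_mul hr)
    have hrv := ih (right_ne_zero_of_mul hr)
    omega

theorem pow_succ_eq_zero_of_lt_of_le [Fintype ι] {N : Matrix ι ι R} {f : ι → ℕ} {B : ℕ}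
    (hN : ∀ u v, N u v ≠ 0 → f u < f v) (hf : ∀ u, f u ≤ B) : N ^ (B + 1) = 0 := by
  ext u v
  by_contra h
  have := le_of_pow_apply_ne_zero hN (B + 1) h
  have := hf v
  omega

theorem eq_one_add_of_diag_eq_one {H : Matrix ι ι R} (hdiag : ∀ z, H z z = 1) :
    H = 1 + of fun u v => if u = v then 0 else H u v := by
  ext u v
  by_cases h : u = v
  · subst h
    simp [hdiag]
  · simp [one_apply_ne h, h]

end Semiring

omit [DecidableEq ι] in
theorem tropical_add_self {S : Type*} [LinearOrder S] (A : Matrix ι ι (Tropical S)) :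
    A + A = A := by
  ext u v
  exact Tropical.add_self _

end Matrix

/-- The tropical powers of a GAP-structured matrix over
`Fin (m+1) × Fin (n+1)` stabilize at exponent `min m n`. -/
theorem stmt8 (m n : ℕ)
    (H : Matrix (Fin (m+1) × Fin (n+1)) (Fin (m+1) × Fin (n+1))
      (Tropical (WithTop ℝ)))
    (hdiag : ∀ z, H z z = 1)
    (hoff : ∀ u v : Fin (m+1) × Fin (n+1), u ≠ v →
      ¬(u.1 < v.1 ∧ u.2 < v.2) → H u v = 0) :
    ∀ k : ℕ, min m n ≤ k → H ^ k = H ^ (min m n) := by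
  intro k hk
  set N : Matrix (Fin (m+1) × Fin (n+1)) (Fin (m+1) × Fin (n+1)) (Tropical (WithTop ℝ)) :=
    .of fun u v => if u = v then 0 else H u v
  have hN : ∀ u v, N u v ≠ 0 → min (u.1 : ℕ) u.2 < min (v.1 : ℕ) v.2 := by
    intro u v huv
    by_cases he : u = v
    · simp [N, he] at huv
    · have hlt : u.1 < v.1 ∧ u.2 < v.2 := by
        by_contra hc
        simp [N, he, hoff u v he hc] at huv
      obtain ⟨h1, h2⟩ := hlt
      rw [Fin.lt_def] at h1 h2
      omega
  have hNil : N ^ (min m n + 1) = 0 :=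
    Matrix.pow_succ_eq_zero_of_lt_of_le hN fun u => by omega
  rw [Matrix.eq_one_add_of_diag_eq_one hdiag]
  exact one_add_pow_eq_of_pow_succ_eq_zero Matrix.tropical_add_self hNil hk
end
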